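/- Let r̆ : ℝ² → ℝ³ be twice continuously differentiable in (s,t), let D : ℝ² → Matrix (Fin 3) (Fin 3) ℝ be continuously differentiable, and let ω, κ : ℝ² → ℝ³ be continuous, such that ∂_tD = −[ω]_× · D and ∂_sD = −[κ]_× · D hold everywhere, where [a]_× denotes the 3×3 matrix with [a]_× x = a × x (cross product in ℝ³). Define v := D·∂_t r̆ and τ := D·∂_s r̆. Then the compatibility condition ∂_t τ = ∂_s v + κ × v − ω × τ holds everywhere. -/

import Mathlib

/-!
By the product rule, `∂_t τ = (∂_t D) ∂_s r̆ + D ∂_t ∂_s r̆` and `∂_s v = (∂_s D) ∂_t r̆ + D ∂_s ∂_t r̆`.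
The mixed partials of the `C²` curve agree (Schwarz), so `∂_t τ - ∂_s v = (∂_t D) ∂_s r̆ - (∂_s D) ∂_t r̆`,
which the evolution equations of `D` turn into `-ω × τ + κ × v`.
-/

noncomputable section

/-- Cross product on `ℝ³`. -/
def cross3 (a b : Fin 3 → ℝ) : Fin 3 → ℝ :=
  ![a 1 * b 2 - a 2 * b 1, a 2 * b 0 - a 0 * b 2, a 0 * b 1 - a 1 * b 0]

/-- The cross-product matrix `[a]_×` with `[a]_× x = a × x`. -/
def crossMat (a : Fin 3 → ℝ) : Matrix (Fin 3) (Fin 3) ℝ :=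
  !![0, -a 2, a 1; a 2, 0, -a 0; -a 1, a 0, 0]

/-- Partial derivative with respect to the time variable `t` (second component). -/
def pt {E : Type*} [NormedAddCommGroup E] [NormedSpace ℝ E]
    (f : ℝ × ℝ → E) (p : ℝ × ℝ) : E :=
  deriv (fun t => f (p.1, t)) p.2

/-- Partial derivative with respect to the space variable `s` (first component). -/
def ps {E : Type*} [NormedAddCommGroup E] [NormedSpace ℝ E]
    (f : ℝ × ℝ → E) (p : ℝ × ℝ) : E :=
  deriv (fun s => f (s, p.2)) p.1

/-- Entrywise `t`-partial derivative of a matrix-valued field. -/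
def ptM (D : ℝ × ℝ → Matrix (Fin 3) (Fin 3) ℝ) (p : ℝ × ℝ) : Matrix (Fin 3) (Fin 3) ℝ :=
  Matrix.of fun i j => deriv (fun t => D (p.1, t) i j) p.2

/-- Entrywise `s`-partial derivative of a matrix-valued field. -/
def psM (D : ℝ × ℝ → Matrix (Fin 3) (Fin 3) ℝ) (p : ℝ × ℝ) : Matrix (Fin 3) (Fin 3) ℝ :=
  Matrix.of fun i j => deriv (fun s => D (s, p.2) i j) p.1

open Matrix

theorem cross3_eq_crossMat_mulVec (a x : Fin 3 → ℝ) : cross3 a x = crossMat a *ᵥ x := by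
  funext i
  fin_cases i <;>
    simp only [cross3, crossMat, mulVec, dotProduct, Fin.sum_univ_three, of_apply, Fin.isValue,
      Fin.zero_eta, Fin.mk_one, Fin.reduceFinMk, cons_val', cons_val_fin_one, cons_val_zero,
      cons_val_one, cons_val, zero_mul, neg_mul, zero_add, add_zero] <;>
    ring

theorem HasDerivAt.matrix_mulVec {m n : Type*} [Fintype n] {M : ℝ → Matrix m n ℝ}
    {M' : Matrix m n ℝ} {x : ℝ → n → ℝ} {x' : n → ℝ} {t : ℝ}
    (hM : ∀ i j, HasDerivAt (fun t => M t i j) (M' i j) t) (hx : HasDerivAt x x' t) :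
    HasDerivAt (fun t => M t *ᵥ x t) (M' *ᵥ x t + M t *ᵥ x') t := by
  refine hasDerivAt_pi.2 fun i => ?_
  have hsum := HasDerivAt.fun_sum (u := Finset.univ)
    fun j _ => (hM i j).fun_mul (hasDerivAt_pi.1 hx j)
  simpa only [mulVec, dotProduct, Pi.add_apply, Finset.sum_add_distrib] using hsum

section PartialDerivatives

variable {E : Type*} [NormedAddCommGroup E] [NormedSpace ℝ E] {f : ℝ × ℝ → E} {p : ℝ × ℝ}

theorem DifferentiableAt.hasDerivAt_pt (hf : DifferentiableAt ℝ f p) :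
    HasDerivAt (fun t => f (p.1, t)) (pt f p) p.2 :=
  (hf.comp p.2 ((differentiableAt_const _).prodMk differentiableAt_id)).hasDerivAt

theorem DifferentiableAt.hasDerivAt_ps (hf : DifferentiableAt ℝ f p) :
    HasDerivAt (fun s => f (s, p.2)) (ps f p) p.1 :=
  (hf.comp p.1 (differentiableAt_id.prodMk (differentiableAt_const _))).hasDerivAt

theorem pt_eq_fderiv (hf : DifferentiableAt ℝ f p) : pt f p = fderiv ℝ f p (0, 1) :=
  (hf.hasFDerivAt.comp_hasDerivAt p.2
    ((hasDerivAt_const _ _).prodMk (hasDerivAt_id _))).deriv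

theorem ps_eq_fderiv (hf : DifferentiableAt ℝ f p) : ps f p = fderiv ℝ f p (1, 0) :=
  (hf.hasFDerivAt.comp_hasDerivAt p.1
    ((hasDerivAt_id _).prodMk (hasDerivAt_const _ _))).deriv

theorem ContDiff.differentiable_fderiv_apply (hf : ContDiff ℝ 2 f) (v : ℝ × ℝ) :
    Differentiable ℝ fun q => fderiv ℝ f q v :=
  fun q => ((hf.fderiv_right le_rfl).differentiable one_ne_zero q).clm_apply
    (differentiableAt_const v)

theorem ContDiff.differentiable_pt (hf : ContDiff ℝ 2 f) : Differentiable ℝ (pt f) := by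
  have hdf : Differentiable ℝ f := hf.differentiable two_ne_zero
  simpa only [funext fun q => pt_eq_fderiv (hdf q)] using hf.differentiable_fderiv_apply (0, 1)

theorem ContDiff.differentiable_ps (hf : ContDiff ℝ 2 f) : Differentiable ℝ (ps f) := by
  have hdf : Differentiable ℝ f := hf.differentiable two_ne_zero
  simpa only [funext fun q => ps_eq_fderiv (hdf q)] using hf.differentiable_fderiv_apply (1, 0)

theorem pt_ps_eq_ps_pt (hf : ContDiff ℝ 2 f) (p : ℝ × ℝ) : pt (ps f) p = ps (pt f) p := by
  have hdf : Differentiable ℝ f := hf.differentiable two_ne_zero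
  have hddf : Differentiable ℝ (fderiv ℝ f) :=
    (hf.fderiv_right le_rfl).differentiable one_ne_zero
  have hps : ps f = fun q => fderiv ℝ f q (1, 0) := funext fun q => ps_eq_fderiv (hdf q)
  have hpt : pt f = fun q => fderiv ℝ f q (0, 1) := funext fun q => pt_eq_fderiv (hdf q)
  rw [hps, hpt,
    pt_eq_fderiv (hf.differentiable_fderiv_apply _ p),
    ps_eq_fderiv (hf.differentiable_fderiv_apply _ p),
    fderiv_clm_apply (hddf p) (differentiableAt_const _),
    fderiv_clm_apply (hddf p) (differentiableAt_const _)]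
  simpa using (hf.contDiffAt.isSymmSndFDerivAt (by simp)) (0, 1) (1, 0)

end PartialDerivatives

section MatrixFields

variable {D : ℝ × ℝ → Matrix (Fin 3) (Fin 3) ℝ} {x : ℝ × ℝ → Fin 3 → ℝ} {p : ℝ × ℝ}

theorem pt_mulVec (hD : ∀ i j, DifferentiableAt ℝ (fun q => D q i j) p)
    (hx : DifferentiableAt ℝ x p) :
    pt (fun q => D q *ᵥ x q) p = ptM D p *ᵥ x p + D p *ᵥ pt x p :=
  (HasDerivAt.matrix_mulVec (fun i j => (hD i j).hasDerivAt_pt) hx.hasDerivAt_pt).deriv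

theorem ps_mulVec (hD : ∀ i j, DifferentiableAt ℝ (fun q => D q i j) p)
    (hx : DifferentiableAt ℝ x p) :
    ps (fun q => D q *ᵥ x q) p = psM D p *ᵥ x p + D p *ᵥ ps x p :=
  (HasDerivAt.matrix_mulVec (fun i j => (hD i j).hasDerivAt_ps) hx.hasDerivAt_ps).deriv

end MatrixFields

theorem compatibility_condition_curve_general
    (r : ℝ × ℝ → Fin 3 → ℝ) (hr : ContDiff ℝ 2 r)
    (D : ℝ × ℝ → Matrix (Fin 3) (Fin 3) ℝ)
    (hD : ∀ i j : Fin 3, ContDiff ℝ 1 (fun p : ℝ × ℝ => D p i j))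
    (ω κ : ℝ × ℝ → Fin 3 → ℝ)
    (hDt : ∀ p : ℝ × ℝ, ptM D p = -(crossMat (ω p)) * D p)
    (hDs : ∀ p : ℝ × ℝ, psM D p = -(crossMat (κ p)) * D p) :
    ∀ p : ℝ × ℝ,
      pt (fun q => (D q).mulVec (ps r q)) p
        = ps (fun q => (D q).mulVec (pt r q)) p
          + cross3 (κ p) ((D p).mulVec (pt r p))
          - cross3 (ω p) ((D p).mulVec (ps r p)) := by
  intro p
  have hDp (i j : Fin 3) : DifferentiableAt ℝ (fun q => D q i j) p :=
    (hD i j).differentiable one_ne_zero p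
  rw [pt_mulVec hDp (hr.differentiable_ps p), ps_mulVec hDp (hr.differentiable_pt p),
    pt_ps_eq_ps_pt hr, hDt, hDs, cross3_eq_crossMat_mulVec, cross3_eq_crossMat_mulVec]
  simp only [neg_mul, neg_mulVec, ← mulVec_mulVec]
  abel

/-- The first compatibility condition of the Cosserat rod theory:
if `∂_tD = −[ω]_×·D` and `∂_sD = −[κ]_×·D`, then `v := D·∂_t r̆` and `τ := D·∂_s r̆`
satisfy `∂_tτ = ∂_s v + κ × v − ω × τ`. -/
theorem compatibility_condition_curve
    (r : ℝ × ℝ → Fin 3 → ℝ) (hr : ContDiff ℝ 2 r)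
    (D : ℝ × ℝ → Matrix (Fin 3) (Fin 3) ℝ)
    (hD : ∀ i j : Fin 3, ContDiff ℝ 1 (fun p : ℝ × ℝ => D p i j))
    (ω κ : ℝ × ℝ → Fin 3 → ℝ) (hω : Continuous ω) (hκ : Continuous κ)
    (hDt : ∀ p : ℝ × ℝ, ptM D p = -(crossMat (ω p)) * D p)
    (hDs : ∀ p : ℝ × ℝ, psM D p = -(crossMat (κ p)) * D p) :
    ∀ p : ℝ × ℝ,
      pt (fun q => (D q).mulVec (ps r q)) p
        = ps (fun q => (D q).mulVec (pt r q)) p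
          + cross3 (κ p) ((D p).mulVec (pt r p))
          - cross3 (ω p) ((D p).mulVec (ps r p)) :=
  compatibility_condition_curve_general r hr D hD ω κ hDt hDs
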